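/- Let G be an unweighted, connected simple graph on n ≥ 2 vertices, let v be a vertex, and let r > 0 be an integer such that vol(B(v,r)) ≤ vol(V)/2. Then there exists an integer i with 0 ≤ i < r such that φ(B(v,i)) ≤ 4 · log n / r, where log denotes the natural logarithm. -/

import Mathlib

/-!
If every ball `B(v, i)` with `i < r` had conductance above `c = 4 log n / r`, then, as these
balls have at most half the volume, each would have more than `c · vol B(v, i)` boundary edges.
Their outer endpoints lie in `B(v, i + 1)`, so `vol B(v, i + 1) ≥ (1 + c) vol B(v, i)` and
`vol B(v, r) ≥ (1 + c)^r`. Since the boundary of a set never exceeds its volume, `c < 1`, and then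
`1 + c ≥ exp (c / 2)` gives `vol B(v, r) ≥ exp (r c / 2) = n²`, whereas `vol B(v, r) ≤ vol V / 2 < n²`.
-/

open Finset Real

variable {V : Type*} [Fintype V] [DecidableEq V]

/-- The normalized Laplacian `I - D^{-1/2} A D^{-1/2}` of a simple graph. -/
noncomputable def normLap (G : SimpleGraph V) [DecidableRel G.Adj] : Matrix V V ℝ :=
  1 - Matrix.diagonal (fun v => (Real.sqrt (G.degree v))⁻¹) * G.adjMatrix ℝ *
    Matrix.diagonal (fun v => (Real.sqrt (G.degree v))⁻¹)

lemma normLap_isHermitian (G : SimpleGraph V) [DecidableRel G.Adj] :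
    (normLap G).IsHermitian := by
  unfold normLap
  apply Matrix.IsHermitian.sub (Matrix.isHermitian_one)
  rw [Matrix.IsHermitian, Matrix.conjTranspose_eq_transpose_of_trivial,
    Matrix.transpose_mul, Matrix.transpose_mul, Matrix.diagonal_transpose,
    G.transpose_adjMatrix, Matrix.mul_assoc]

/-- The `k`-th smallest eigenvalue (1-indexed) of the normalized Laplacian. -/
noncomputable def normLapEigenvalue (G : SimpleGraph V) [DecidableRel G.Adj]
    (k : ℕ) (hk : k - 1 < Fintype.card V) : ℝ :=
  let f : Fin (Fintype.card V) → ℝ :=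
    (normLap_isHermitian G).eigenvalues ∘ (Fintype.equivFin V).symm
  (f ∘ Tuple.sort f) ⟨k - 1, hk⟩

/-- Volume of a set of vertices: sum of degrees. -/
def vol (G : SimpleGraph V) [DecidableRel G.Adj] (S : Finset V) : ℕ :=
  ∑ v ∈ S, G.degree v

/-- Number of edges with exactly one endpoint in `S`. -/
def cut (G : SimpleGraph V) [DecidableRel G.Adj] (S : Finset V) : ℕ :=
  ((S ×ˢ Sᶜ).filter fun p => G.Adj p.1 p.2).card

/-- Conductance of a set of vertices. -/
noncomputable def conductance (G : SimpleGraph V) [DecidableRel G.Adj] (S : Finset V) : ℝ :=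
  (cut G S : ℝ) / min (vol G S) (vol G Sᶜ)

/-- Ball of radius `r` around a vertex in graph distance. -/
noncomputable def ball (G : SimpleGraph V) (v : V) (r : ℕ) : Finset V :=
  Finset.univ.filter fun u => G.dist v u ≤ r

/-- Set of vertices at distance at most `r` from a set `S`. -/
noncomputable def ballSet (G : SimpleGraph V) (S : Finset V) (r : ℕ) : Finset V :=
  Finset.univ.filter fun u => ∃ w ∈ S, G.dist w u ≤ r

/-- Exterior neighborhood of `S`: vertices outside `S` adjacent to some vertex of `S`. -/
def nbhd (G : SimpleGraph V) [DecidableRel G.Adj] (S : Finset V) : Finset V :=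
  Finset.univ.filter fun u => u ∉ S ∧ ∃ w ∈ S, G.Adj w u

section Ball

variable (G : SimpleGraph V)

omit [DecidableEq V] in
lemma mem_ball {v u : V} {i : ℕ} : u ∈ ball G v i ↔ G.dist v u ≤ i := by
  simp [ball]

omit [DecidableEq V] in
lemma ball_mono (v : V) {i j : ℕ} (h : i ≤ j) : ball G v i ⊆ ball G v j := fun _ hu =>
  (mem_ball G).2 (((mem_ball G).1 hu).trans h)

end Ball

section Volume

variable (G : SimpleGraph V) [DecidableRel G.Adj]

omit [DecidableEq V] in
lemma vol_mono {S T : Finset V} (h : S ⊆ T) : vol G S ≤ vol G T :=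
  sum_le_sum_of_subset h

omit [DecidableEq V] in
lemma vol_univ_le_card_sq : vol G univ ≤ Fintype.card V ^ 2 := by
  calc vol G univ ≤ #(univ : Finset V) * Fintype.card V :=
        sum_le_card_nsmul _ _ _ fun u _ => (G.degree_lt_card_verts u).le
    _ = Fintype.card V ^ 2 := by rw [card_univ, sq]

lemma vol_add_vol_compl (S : Finset V) : vol G S + vol G Sᶜ = vol G univ :=
  sum_add_sum_compl S _

lemma vol_le_vol_compl_of_le_half {S : Finset V} (h : (vol G S : ℝ) ≤ vol G univ / 2) :
    vol G S ≤ vol G Sᶜ := by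
  have hsum : (vol G S : ℝ) + vol G Sᶜ = vol G univ := by exact_mod_cast vol_add_vol_compl G S
  exact_mod_cast (by linarith : (vol G S : ℝ) ≤ vol G Sᶜ)

lemma card_adj_product_le_vol (S T : Finset V) :
    #((S ×ˢ T).filter fun p => G.Adj p.1 p.2) ≤ vol G S := by
  calc #((S ×ˢ T).filter fun p => G.Adj p.1 p.2)
      ≤ #(S.biUnion fun u => {u} ×ˢ G.neighborFinset u) := card_le_card fun p hp => by
        simp only [mem_filter, mem_product] at hp
        exact mem_biUnion.2 ⟨p.1, hp.1.1, mem_product.2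
          ⟨mem_singleton_self _, (G.mem_neighborFinset _ _).2 hp.2⟩⟩
    _ ≤ ∑ u ∈ S, #({u} ×ˢ G.neighborFinset u) := card_biUnion_le
    _ = vol G S := by simp [vol]

lemma cut_le_vol (S : Finset V) : cut G S ≤ vol G S :=
  card_adj_product_le_vol G S Sᶜ

lemma cut_le_vol_of_adj_mem (S T : Finset V) (h : ∀ u ∈ S, ∀ w ∉ S, G.Adj u w → w ∈ T) :
    cut G S ≤ vol G T := by
  refine le_trans ?_ (card_adj_product_le_vol G T S)
  refine card_le_card_of_injOn Prod.swap (fun p hp => ?_) Prod.swap_injective.injOn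
  simp only [coe_filter, mem_product, mem_compl, Set.mem_ofPred_eq] at hp
  simpa using ⟨⟨h _ hp.1.1 _ hp.1.2 hp.2, hp.1.1⟩, hp.2.symm⟩

lemma vol_ball_add_cut_le (v : V) (i : ℕ) :
    vol G (ball G v i) + cut G (ball G v i) ≤ vol G (ball G v (i + 1)) := by
  have hcut : cut G (ball G v i) ≤ vol G (ball G v (i + 1) \ ball G v i) := by
    refine cut_le_vol_of_adj_mem G _ _ fun u hu w hw huw => mem_sdiff.2 ⟨?_, hw⟩
    rw [mem_ball] at hu ⊢
    calc G.dist v w ≤ G.dist v u + G.dist u w := huw.reachable.dist_triangle_right v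
      _ ≤ i + 1 := by rw [SimpleGraph.dist_eq_one_iff_adj.2 huw]; omega
  have hsplit : vol G (ball G v (i + 1) \ ball G v i) + vol G (ball G v i)
      = vol G (ball G v (i + 1)) := sum_sdiff (ball_mono G v i.le_succ)
  omega

lemma one_add_pow_mul_vol_ball_le (v : V) {r : ℕ} {c : ℝ} (hc : 0 ≤ c)
    (h : ∀ i < r, c * vol G (ball G v i) ≤ cut G (ball G v i)) :
    (1 + c) ^ r * vol G (ball G v 0) ≤ vol G (ball G v r) :=
  geom_le (u := fun i => (vol G (ball G v i) : ℝ)) (by linarith) r fun i hi => by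
    have hstep : (vol G (ball G v i) + cut G (ball G v i) : ℝ) ≤ vol G (ball G v (i + 1)) := by
      exact_mod_cast vol_ball_add_cut_le G v i
    linarith [h i hi]

lemma mul_vol_lt_cut_of_lt_conductance {S : Finset V} {c : ℝ} (hc : 0 ≤ c)
    (hS : vol G S ≤ vol G Sᶜ) (h : c < conductance G S) : c * vol G S < cut G S := by
  rw [conductance, Nat.cast_min, min_eq_left (by exact_mod_cast hS)] at h
  -- if `vol S = 0` the conductance is the junk value `cut S / 0 = 0`
  have hpos : (0 : ℝ) < vol G S := by
    by_contra! h0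
    rw [le_antisymm h0 (Nat.cast_nonneg _), div_zero] at h
    linarith
  rwa [lt_div_iff₀ hpos] at h

lemma vol_pos_of_mul_vol_lt_cut {S : Finset V} {c : ℝ} (h : c * vol G S < cut G S) :
    0 < vol G S := by
  by_contra! h0
  have hcut : cut G S = 0 := by have := cut_le_vol G S; omega
  simp [Nat.le_zero.1 h0, hcut] at h

lemma lt_one_of_mul_vol_lt_cut {S : Finset V} {c : ℝ} (h : c * vol G S < cut G S) : c < 1 := by
  have hcut : (cut G S : ℝ) ≤ vol G S := by exact_mod_cast cut_le_vol G S
  by_contra! hc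
  nlinarith [(vol G S).cast_nonneg (α := ℝ)]

end Volume

lemma exp_mul_half_le_one_add_pow {c : ℝ} (hc₀ : 0 ≤ c) (hc₂ : c ≤ 2) (r : ℕ) :
    exp (r * c / 2) ≤ (1 + c) ^ r := by
  have hlog : c / 2 ≤ log (1 + c) := by
    refine le_trans ?_ (le_log_one_add_of_nonneg hc₀)
    rw [div_le_div_iff₀ (by norm_num) (by linarith)]
    nlinarith
  rw [← exp_log (by positivity : (0 : ℝ) < (1 + c) ^ r), log_pow, exp_le_exp, mul_div_assoc]
  exact mul_le_mul_of_nonneg_left hlog r.cast_nonneg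

theorem exists_small_conductance_ball_general (G : SimpleGraph V) [DecidableRel G.Adj]
    (v : V) (r : ℕ) (hr : 0 < r)
    (hvol : (vol G (ball G v r) : ℝ) ≤ (vol G Finset.univ : ℝ) / 2) :
    ∃ i < r, conductance G (ball G v i) ≤ 4 * Real.log (Fintype.card V) / r := by
  by_contra! hcon
  set n := Fintype.card V
  set c : ℝ := 4 * log n / r with hc_def
  have hc : 0 ≤ c := by have := log_natCast_nonneg n; positivity
  have hcut : ∀ i < r, c * vol G (ball G v i) < cut G (ball G v i) := fun i hi =>
    mul_vol_lt_cut_of_lt_conductance G hc (vol_le_vol_compl_of_le_half G <| le_trans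
      (by exact_mod_cast vol_mono G (ball_mono G v hi.le)) hvol) (hcon i hi)
  have hvol₀ : (1 : ℝ) ≤ vol G (ball G v 0) := by
    exact_mod_cast vol_pos_of_mul_vol_lt_cut G (hcut 0 hr)
  have hc₁ : c < 1 := lt_one_of_mul_vol_lt_cut G (hcut 0 hr)
  have hgrowth := one_add_pow_mul_vol_ball_le G v hc fun i hi => (hcut i hi).le
  have hn_pos : (0 : ℝ) < n := by exact_mod_cast Fintype.card_pos_iff.2 ⟨v⟩
  have hn_sq : (n : ℝ) ^ 2 = exp (r * c / 2) := by
    rw [hc_def, ← exp_log (pow_pos hn_pos 2), log_pow]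
    field_simp
    ring_nf
  have hcontra : (n : ℝ) ^ 2 ≤ n ^ 2 / 2 := calc
    (n : ℝ) ^ 2 ≤ (1 + c) ^ r := hn_sq ▸ exp_mul_half_le_one_add_pow hc (by linarith) r
    _ ≤ (1 + c) ^ r * vol G (ball G v 0) := le_mul_of_one_le_right (by positivity) hvol₀
    _ ≤ vol G (ball G v r) := hgrowth
    _ ≤ vol G univ / 2 := hvol
    _ ≤ n ^ 2 / 2 := by gcongr; exact_mod_cast vol_univ_le_card_sq G
  linarith [pow_pos hn_pos 2]

/-- If the ball of radius `r` around `v` has volume at most half the total volume, then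
some ball of smaller radius around `v` has conductance at most `4 log n / r`. -/
theorem exists_small_conductance_ball (G : SimpleGraph V) [DecidableRel G.Adj]
    (hG : G.Connected) (hn : 2 ≤ Fintype.card V) (v : V) (r : ℕ) (hr : 0 < r)
    (hvol : (vol G (ball G v r) : ℝ) ≤ (vol G Finset.univ : ℝ) / 2) :
    ∃ i < r, conductance G (ball G v i) ≤ 4 * Real.log (Fintype.card V) / r :=
  exists_small_conductance_ball_general G v r hr hvol
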